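/- arXiv:2503.01721 — 3 statements merged into one kernel-verified Lean document; each statement's English description precedes it below -/
import Mathlib

section
/- Let F be a field, V a finite-dimensional F-vector space, q : V → F a non-degenerate isotropic quadratic form and a ∈ F. Then diam(G_{q,a}) ≤ diam(G_{H,a}) in ℕ∪{∞}, where H is the hyperbolic plane on F². -/
open QuadraticMap Module

/-- The representation graph `G_{q,a}`: vertices are the vectors of `V`, and distinct
`x, y` are adjacent iff `q (x - y) = a`. -/
def repGraph {F V : Type*} [Field F] [AddCommGroup V] [Module F V]
    (q : QuadraticForm F V) (a : F) : SimpleGraph V where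
  Adj x y := x ≠ y ∧ q (x - y) = a
  symm := by
    constructor
    rintro x y ⟨hxy, h⟩
    refine ⟨hxy.symm, ?_⟩
    rw [← neg_sub x y, QuadraticMap.map_neg]
    exact h
  loopless := by constructor; rintro x ⟨h, -⟩; exact h rfl

/-- The hyperbolic plane `H` on `F²`, i.e. the quadratic form `(x, y) ↦ x * y`. -/
noncomputable def hypPlane (F : Type*) [Field F] : QuadraticForm F (F × F) :=
  LinearMap.BilinMap.toQuadraticMap
    ((LinearMap.mul F F).compl₁₂ (LinearMap.fst F F F) (LinearMap.snd F F F))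

theorem hypPlane_apply (F : Type*) [Field F] (v : F × F) : hypPlane F v = v.1 * v.2 := rfl

/-!
If `q` is non-degenerate and isotropic, every nonzero `v` is `q v • e + f` for a hyperbolic pair
`(e, f)`, i.e. `q e = q f = 0` and `polar q e f = 1`. The pair spans a copy of the hyperbolic
plane, so `(s, t) ↦ s • e + t • f + y` embeds `G_{H,a}` into `G_{q,a}` as a graph homomorphism
sending `(q (x - y), 1)` to `x` and `0` to `y`; hence `d(x, y)` is at most a distance in `G_{H,a}`.

To find `e`, it suffices to find an isotropic vector not orthogonal to `v`. Starting from one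
hyperbolic pair `(u, f)`, either `u` or `f` works, or `v ⊥ u, f`; then any `z` with
`polar q z v ≠ 0` can be made isotropic by adding a vector of `span {u, f}`, which does not
change its pairing with `v`.
-/

namespace QuadraticMap

variable {F V : Type*} [Field F] [AddCommGroup V] [Module F V] {q : QuadraticForm F V}

structure IsHyperbolicPair (q : QuadraticForm F V) (e f : V) : Prop where
  isotropic_left : q e = 0
  isotropic_right : q f = 0
  polar_eq_one : polar q e f = 1

lemma exists_polar_ne_zero (hnd : ∀ x : V, (∀ y : V, polar q x y = 0) → x = 0) {x : V}
    (hx : x ≠ 0) : ∃ y, polar q x y ≠ 0 := by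
  by_contra! h
  exact hx (hnd x h)

lemma exists_isHyperbolicPair_of_polar_ne_zero {e v : V} (he : q e = 0)
    (hev : polar q e v ≠ 0) : ∃ e' f, IsHyperbolicPair q e' f ∧ v = q v • e' + f := by
  set e' := (polar q e v)⁻¹ • e
  have he' : q e' = 0 := by simp [e', QuadraticMap.map_smul, he]
  have he'v : polar q e' v = 1 := by simp [e', polar_smul_left, hev]
  refine ⟨e', v - q v • e', ⟨he', ?_, ?_⟩, (add_sub_cancel _ _).symm⟩
  · rw [sub_eq_add_neg, ← neg_smul, QuadraticMap.map_add (⇑q), QuadraticMap.map_smul,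
      polar_smul_right, polar_comm, he'v, he']
    simp
  · rw [polar_sub_right, polar_smul_right, polar_self, he'v, he']
    simp

lemma IsHyperbolicPair.exists_isotropic_add {u f : V} (h : IsHyperbolicPair q u f) (z : V) :
    ∃ α β : F, q (z + α • u + β • f) = 0 := by
  -- With `a = polar q z u` and `b = polar q z f`:
  -- `q (z + α • u + β • f) = q z - a * b + (α + b) * (β + a)`.
  refine ⟨1 - polar q z f, polar q z u * polar q z f - q z - polar q z u, ?_⟩
  simp only [QuadraticMap.map_add (⇑q), QuadraticMap.map_smul, polar_add_left, polar_smul_left,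
    polar_smul_right, h.isotropic_left, h.isotropic_right, h.polar_eq_one, smul_eq_mul]
  ring

lemma exists_isotropic_polar_ne_zero (hnd : ∀ x : V, (∀ y : V, polar q x y = 0) → x = 0)
    (hiso : ∃ v : V, v ≠ 0 ∧ q v = 0) {v : V} (hv : v ≠ 0) :
    ∃ e, q e = 0 ∧ polar q e v ≠ 0 := by
  obtain ⟨u₀, hu₀, hqu₀⟩ := hiso
  obtain ⟨z₀, hz₀⟩ := exists_polar_ne_zero hnd hu₀
  obtain ⟨u, f, huf, -⟩ := exists_isHyperbolicPair_of_polar_ne_zero hqu₀ hz₀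
  obtain hu | hu := ne_or_eq (polar q u v) 0
  · exact ⟨u, huf.isotropic_left, hu⟩
  obtain hf | hf := ne_or_eq (polar q f v) 0
  · exact ⟨f, huf.isotropic_right, hf⟩
  obtain ⟨z, hz⟩ := exists_polar_ne_zero hnd hv
  obtain ⟨α, β, hq⟩ := huf.exists_isotropic_add z
  refine ⟨_, hq, ?_⟩
  simpa [polar_add_left, polar_smul_left, hu, hf, polar_comm q z v] using hz

lemma exists_isHyperbolicPair_eq_smul_add (hnd : ∀ x : V, (∀ y : V, polar q x y = 0) → x = 0)
    (hiso : ∃ v : V, v ≠ 0 ∧ q v = 0) {v : V} (hv : v ≠ 0) :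
    ∃ e f, IsHyperbolicPair q e f ∧ v = q v • e + f :=
  let ⟨_, he, hev⟩ := exists_isotropic_polar_ne_zero hnd hiso hv
  exists_isHyperbolicPair_of_polar_ne_zero he hev

namespace IsHyperbolicPair

variable {e f : V} (h : IsHyperbolicPair q e f)

def isometry : hypPlane F →qᵢ q where
  toLinearMap := (LinearMap.toSpanSingleton F V e).coprod (LinearMap.toSpanSingleton F V f)
  map_app' p := by
    simp [hypPlane_apply, QuadraticMap.map_add (⇑q), QuadraticMap.map_smul, polar_smul_left,
      polar_smul_right, h.isotropic_left, h.isotropic_right, h.polar_eq_one, mul_comm]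

lemma isometry_apply (p : F × F) : h.isometry p = p.1 • e + p.2 • f := rfl

lemma isometry_injective : Function.Injective h.isometry := by
  rw [injective_iff_map_eq_zero]
  rintro ⟨s, t⟩ hst
  rw [isometry_apply] at hst
  have hs : s = 0 := by
    simpa [polar_add_left, polar_smul_left, polar_self, h.isotropic_right, h.polar_eq_one]
      using congrArg (polar q · f) hst
  have ht : t = 0 := by
    simpa [polar_add_right, polar_smul_right, polar_self, h.isotropic_left, h.polar_eq_one]
      using congrArg (polar q e ·) hst
  rw [hs, ht, Prod.mk_zero_zero]

end IsHyperbolicPair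

end QuadraticMap

lemma SimpleGraph.Hom.edist_map_le {α β : Type*} {G : SimpleGraph α} {G' : SimpleGraph β}
    (φ : G →g G') (u v : α) : G'.edist (φ u) (φ v) ≤ G.edist u v := by
  by_cases huv : G.Reachable u v
  · obtain ⟨p, hp⟩ := huv.exists_walk_length_eq_edist
    rw [← hp, ← p.length_map φ]
    exact SimpleGraph.edist_le _
  · rw [SimpleGraph.edist_eq_top_of_not_reachable huv]
    exact le_top

@[simps]
def QuadraticMap.Isometry.repGraphHom {F V W : Type*} [Field F] [AddCommGroup V] [Module F V]
    [AddCommGroup W] [Module F W] {q₁ : QuadraticForm F V} {q₂ : QuadraticForm F W}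
    (φ : q₁ →qᵢ q₂) (hφ : Function.Injective φ) (a : F) (y : W) :
    repGraph q₁ a →g repGraph q₂ a where
  toFun w := φ w + y
  map_rel' {w w'} := by
    rintro ⟨hne, hq⟩
    refine ⟨fun h ↦ hne (hφ (add_right_cancel h)), ?_⟩
    rw [add_sub_add_right_eq_sub, ← map_sub, φ.map_app, hq]

theorem stmt_3_general {F V : Type*} [Field F] [AddCommGroup V] [Module F V]
    (q : QuadraticForm F V)
    (hnd : ∀ x : V, (∀ y : V, polar (⇑q) x y = 0) → x = 0)
    (hiso : ∃ v : V, v ≠ 0 ∧ q v = 0) (a : F) :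
    (repGraph q a).ediam ≤ (repGraph (hypPlane F) a).ediam := by
  refine SimpleGraph.ediam_le_of_edist_le fun x y ↦ ?_
  obtain rfl | hxy := eq_or_ne x y
  · simp
  obtain ⟨e, f, hef, hv⟩ := exists_isHyperbolicPair_eq_smul_add hnd hiso (sub_ne_zero.mpr hxy)
  let φ := hef.isometry.repGraphHom hef.isometry_injective a y
  have hφx : φ (q (x - y), 1) = x := by
    simp [φ, IsHyperbolicPair.isometry_apply, ← hv]
  have hφy : φ 0 = y := by simp [φ]
  calc (repGraph q a).edist x y = (repGraph q a).edist (φ (q (x - y), 1)) (φ 0) := by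
        rw [hφx, hφy]
    _ ≤ (repGraph (hypPlane F) a).edist (q (x - y), 1) 0 := φ.edist_map_le _ _
    _ ≤ (repGraph (hypPlane F) a).ediam := SimpleGraph.edist_le_ediam

/-- For a non-degenerate isotropic form `q`, `diam G_{q,a} ≤ diam G_{H,a}` where `H` is
the hyperbolic plane on `F²`. -/
theorem stmt_3 {F V : Type*} [Field F] [AddCommGroup V] [Module F V] [FiniteDimensional F V]
    (q : QuadraticForm F V)
    (hnd : ∀ x : V, (∀ y : V, polar (⇑q) x y = 0) → x = 0)
    (hiso : ∃ v : V, v ≠ 0 ∧ q v = 0) (a : F) :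
    (repGraph q a).ediam ≤ (repGraph (hypPlane F) a).ediam :=
  stmt_3_general q hnd hiso a
end

section
/- Let F be a field, H the hyperbolic plane on F², and a ∈ F with a ≠ 0. Then: (1) the representation graph G_{H,a} is connected if and only if F has at least 5 elements; and (2) if F has at least 5 elements, then every isotropic vector v (i.e. v with H(v) = 0) satisfies d(0,v) ≤ 3 in G_{H,a}, and diam(G_{H,a}) ≤ 4. -/
open QuadraticMap Module

/-!
If `5 ≤ #F`, some `k` has `k (k + 1) (k² + k + 1) ≠ 0`, and for `s ≠ 0` and
`d = s / (k² + k + 1)` the walk `0 — ((k+1)d, a/((k+1)d)) — (s + kd, a/(kd)) — (s, 0)`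
shows that `(s, 0)`, and by the symmetry `(x, y) ↦ (y, x)` also `(0, s)`, is within distance
`3` of `0`. Every vector `v` with `v.2 ≠ 0` is adjacent to the isotropic vector
`(v.1 - a / v.2, 0)`, and translations are automorphisms, so the diameter is at most `4`;
in particular the graph is connected.

If `#F ≤ 4`, every edge step `(t, a / t)` has `t² = 1` (`#F ≤ 3`) or `t³ = 1` (`#F = 4`),
and then `a x - y`, resp. `a² x + y²`, is constant along edges but separates `0` from `(0, 1)`.
-/

open Cardinal Polynomial

namespace SimpleGraph

variable {V W : Type*} {G : SimpleGraph V} {G' : SimpleGraph W}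

lemma Hom.edist_le (f : G →g G') (u v : V) : G'.edist (f u) (f v) ≤ G.edist u v := by
  obtain h | h := eq_or_ne (G.edist u v) ⊤
  · simp [h]
  obtain ⟨p, hp⟩ := exists_walk_of_edist_ne_top h
  rw [← hp, ← p.length_map f]
  exact SimpleGraph.edist_le _

lemma edist_le_three_of_adj {u x y v : V} (h₁ : G.Adj u x) (h₂ : G.Adj x y) (h₃ : G.Adj y v) :
    G.edist u v ≤ 3 :=
  edist_le (.cons h₁ (.cons h₂ (.cons h₃ .nil)))

lemma Reachable.eq_of_forall_adj {α : Type*} (f : V → α) (hf : ∀ u v, G.Adj u v → f u = f v)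
    {u v : V} (h : G.Reachable u v) : f u = f v := by
  obtain ⟨p⟩ := h
  induction p with
  | nil => rfl
  | cons h _ ih => exact (hf _ _ h).trans ih

end SimpleGraph

open SimpleGraph

section RepGraph

variable {F V : Type*} [Field F] [AddCommGroup V] [Module F V] {q : QuadraticForm F V} {a : F}

lemma repGraph_adj_iff (ha : a ≠ 0) {x y : V} : (repGraph q a).Adj x y ↔ q (x - y) = a := by
  refine ⟨And.right, fun h => ⟨fun hxy => ha ?_, h⟩⟩
  rw [← h, hxy, sub_self, QuadraticMap.map_zero]

def repGraph.addRightHom (q : QuadraticForm F V) (a : F) (c : V) :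
    repGraph q a →g repGraph q a where
  toFun x := x + c
  map_rel' := by
    rintro x y ⟨hxy, h⟩
    exact ⟨by simpa using hxy, by rwa [add_sub_add_right_eq_sub]⟩

lemma repGraph_edist_le_edist_zero_sub (u v : V) :
    (repGraph q a).edist u v ≤ (repGraph q a).edist 0 (v - u) := by
  simpa [repGraph.addRightHom, add_comm] using (repGraph.addRightHom q a u).edist_le 0 (v - u)

end RepGraph

section HypPlane

variable {F : Type*} [Field F] {a : F}

lemma repGraph_hypPlane_adj_iff (ha : a ≠ 0) {x y : F × F} :
    (repGraph (hypPlane F) a).Adj x y ↔ (x.1 - y.1) * (x.2 - y.2) = a :=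
  repGraph_adj_iff ha

def repGraph.hypPlaneSwapHom (a : F) : repGraph (hypPlane F) a →g repGraph (hypPlane F) a where
  toFun := Prod.swap
  map_rel' := by
    rintro x y ⟨hxy, h⟩
    refine ⟨fun h' => hxy (Prod.swap_injective h'), ?_⟩
    rw [hypPlane_apply] at h ⊢
    simpa [mul_comm] using h

lemma exists_mul_add_one_mul_ne_zero (h5 : 5 ≤ #F) :
    ∃ k : F, k * (k + 1) * (k ^ 2 + k + 1) ≠ 0 := by
  by_contra! h
  set p : F[X] := X * (X + 1) * (X ^ 2 + X + 1)
  have hp : p.Monic := by unfold p; monicity!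
  have hdeg : p.natDegree = 4 := by unfold p; compute_degree!
  refine hp.ne_zero (eq_zero_of_forall_eval_zero_of_natDegree_lt_card p
    (fun r => by simpa [p] using h r) ?_)
  rw [hdeg]
  exact lt_of_lt_of_le (by norm_num) h5

lemma edist_zero_fst_le_three (ha : a ≠ 0) {k s : F} (hk : k * (k + 1) * (k ^ 2 + k + 1) ≠ 0)
    (hs : s ≠ 0) : (repGraph (hypPlane F) a).edist 0 (s, 0) ≤ 3 := by
  obtain ⟨hk₀₁, hk₂⟩ := mul_ne_zero_iff.mp hk
  obtain ⟨hk₀, hk₁⟩ := mul_ne_zero_iff.mp hk₀₁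
  set d := s / (k ^ 2 + k + 1)
  have hd : d ≠ 0 := div_ne_zero hs hk₂
  have hs' : s = d * (k ^ 2 + k + 1) := (div_mul_cancel₀ s hk₂).symm
  refine edist_le_three_of_adj (x := ((k + 1) * d, a / ((k + 1) * d)))
    (y := (s + k * d, a / (k * d))) ?_ ?_ ?_ <;>
    simp only [repGraph_hypPlane_adj_iff ha, Prod.fst_zero, Prod.snd_zero]
  · field_simp; ring
  · rw [hs']; field_simp; ring
  · field_simp; ring

lemma edist_zero_le_three_of_isotropic (ha : a ≠ 0) (h5 : 5 ≤ #F) {v : F × F}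
    (hv : hypPlane F v = 0) : (repGraph (hypPlane F) a).edist 0 v ≤ 3 := by
  obtain ⟨k, hk⟩ := exists_mul_add_one_mul_ne_zero h5
  obtain ⟨x, y⟩ := v
  rw [hypPlane_apply] at hv
  obtain rfl | rfl := mul_eq_zero.mp hv
  · obtain rfl | hy := eq_or_ne y 0
    · simp [← Prod.zero_eq_mk]
    · simpa [repGraph.hypPlaneSwapHom] using
        ((repGraph.hypPlaneSwapHom a).edist_le 0 (y, 0)).trans (edist_zero_fst_le_three ha hk hy)
  · obtain rfl | hx := eq_or_ne x 0
    · simp [← Prod.zero_eq_mk]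
    · exact edist_zero_fst_le_three ha hk hx

lemma edist_zero_le_four (ha : a ≠ 0) (h5 : 5 ≤ #F) (v : F × F) :
    (repGraph (hypPlane F) a).edist 0 v ≤ 4 := by
  obtain hv | hv := eq_or_ne v.2 0
  · refine (edist_zero_le_three_of_isotropic ha h5 ?_).trans (by norm_num)
    rw [hypPlane_apply, hv, mul_zero]
  have hadj : (repGraph (hypPlane F) a).Adj (v.1 - a / v.2, 0) v := by
    rw [repGraph_hypPlane_adj_iff ha]
    field_simp
    ring
  calc (repGraph (hypPlane F) a).edist 0 v
      ≤ (repGraph (hypPlane F) a).edist 0 (v.1 - a / v.2, 0) + 1 :=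
        SimpleGraph.edist_triangle.trans (add_le_add_right (edist_eq_one_iff_adj.mpr hadj).le _)
    _ ≤ 3 + 1 := by
        gcongr
        exact edist_zero_le_three_of_isotropic ha h5 (by rw [hypPlane_apply, mul_zero])
    _ = 4 := by norm_num

lemma ediam_repGraph_hypPlane_le_four (ha : a ≠ 0) (h5 : 5 ≤ #F) :
    (repGraph (hypPlane F) a).ediam ≤ 4 :=
  ediam_le_of_edist_le fun u v =>
    repGraph_edist_le_edist_zero_sub u v |>.trans (edist_zero_le_four ha h5 (v - u))

lemma not_connected_of_forall_sq_eq_one (ha : a ≠ 0) (h : ∀ t : F, t ≠ 0 → t ^ 2 = 1) :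
    ¬ (repGraph (hypPlane F) a).Connected := by
  intro hconn
  have hinv : ∀ u v : F × F, (repGraph (hypPlane F) a).Adj u v →
      a * u.1 - u.2 = a * v.1 - v.2 := by
    intro u v huv
    rw [repGraph_hypPlane_adj_iff ha] at huv
    have ht := h (u.1 - v.1) (left_ne_zero_of_mul (huv.symm ▸ ha))
    linear_combination (-(u.1 - v.1)) * huv + (u.2 - v.2) * ht
  have := (hconn 0 (0, 1)).eq_of_forall_adj _ hinv
  simp at this

lemma two_eq_zero_of_forall_pow_three_eq_one (h : ∀ t : F, t ≠ 0 → t ^ 3 = 1) :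
    (2 : F) = 0 := by
  by_contra h2
  have := h (-1) (neg_ne_zero.mpr one_ne_zero)
  apply h2
  linear_combination -this

lemma not_connected_of_forall_pow_three_eq_one (ha : a ≠ 0)
    (h : ∀ t : F, t ≠ 0 → t ^ 3 = 1) :
    ¬ (repGraph (hypPlane F) a).Connected := by
  intro hconn
  have h2 := two_eq_zero_of_forall_pow_three_eq_one h
  have hinv : ∀ u v : F × F, (repGraph (hypPlane F) a).Adj u v →
      a ^ 2 * u.1 + u.2 ^ 2 = a ^ 2 * v.1 + v.2 ^ 2 := by
    intro u v huv
    rw [repGraph_hypPlane_adj_iff ha] at huv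
    have ht := h (u.1 - v.1) (left_ne_zero_of_mul (huv.symm ▸ ha))
    -- `Δy = a Δx²`, so `Δy² = a² Δx⁴ = a² Δx`; squaring is additive in characteristic `2`
    linear_combination (-((u.1 - v.1) * (a + (u.1 - v.1) * (u.2 - v.2)))) * huv
      + (u.2 - v.2) ^ 2 * ht + ((u.2 - v.2) ^ 2 + (u.2 - v.2) * v.2) * h2
  have := (hconn 0 (0, 1)).eq_of_forall_adj _ hinv
  simp at this

lemma not_connected_of_mk_lt_five (ha : a ≠ 0) (h : #F < 5) :
    ¬ (repGraph (hypPlane F) a).Connected := by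
  have : Finite F := Cardinal.lt_aleph0_iff_finite.mp (h.trans Cardinal.natCast_lt_aleph0)
  have := Fintype.ofFinite F
  have hq : Fintype.card F < 5 := by simpa [Cardinal.mk_fintype] using h
  have hq2 : 2 ≤ Fintype.card F := Fintype.one_lt_card
  have hpow {n : ℕ} (hn : Fintype.card F - 1 ∣ n) (t : F) (ht : t ≠ 0) : t ^ n = 1 := by
    obtain ⟨m, rfl⟩ := hn
    rw [pow_mul, FiniteField.pow_card_sub_one_eq_one t ht, one_pow]
  obtain hq3 | hq4 : Fintype.card F ≤ 3 ∨ Fintype.card F = 4 := by omega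
  · exact not_connected_of_forall_sq_eq_one ha (hpow (by interval_cases Fintype.card F <;> decide))
  · exact not_connected_of_forall_pow_three_eq_one ha (hpow (by rw [hq4]))

end HypPlane

/-- For the hyperbolic plane `H` over `F` and `a ≠ 0`: `G_{H,a}` is connected iff `|F| ≥ 5`;
moreover if `|F| ≥ 5` then every isotropic vector is at distance at most `3` from the
origin and `diam G_{H,a} ≤ 4`. -/
theorem stmt_6 {F : Type*} [Field F] (a : F) (ha : a ≠ 0) :
    ((repGraph (hypPlane F) a).Connected ↔ 5 ≤ Cardinal.mk F) ∧
    (5 ≤ Cardinal.mk F →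
      (∀ v : F × F, hypPlane F v = 0 → (repGraph (hypPlane F) a).edist 0 v ≤ 3) ∧
      (repGraph (hypPlane F) a).ediam ≤ 4) := by
  refine ⟨⟨fun hconn => ?_, fun h5 => ?_⟩,
    fun h5 => ⟨fun v => edist_zero_le_three_of_isotropic ha h5,
      ediam_repGraph_hypPlane_le_four ha h5⟩⟩
  · by_contra h5
    exact not_connected_of_mk_lt_five ha (not_le.mp h5) hconn
  · exact connected_of_ediam_ne_top ((ediam_repGraph_hypPlane_le_four ha h5).trans_lt
      (by decide)).ne
end

section
/- Let F be a finite field with at least 7 elements, V a 2-dimensional F-vector space, q : V → F a non-degenerate anisotropic quadratic form, and a ∈ F with a ≠ 0. Then diam(G_{q,a}) ≥ 3; that is, there exist vertices u, v ∈ V with graph distance d(u,v) ≥ 3 in G_{q,a}. -/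
open QuadraticMap Module

/-!
The ball of radius 2 about `0` in `G_{q,a}` is `{0} ∪ S ∪ (S + S)` with `S = {x | q x = a}`.
Since `q` is anisotropic, a line through `p ∈ S` meets `S` in at most one further point, and the
tangent line at `p` meets it in none; so sending `x ≠ p` to `[x - p]` and `p` to the tangent
direction embeds `S` into the projective line, and `|S| ≤ n + 1`. As addition is commutative,
`|S + S| ≤ (|S| + 1).choose 2`, and `1 + (n + 1) + (n + 2).choose 2 < n ^ 2` exactly when `n ≥ 7`.
-/

open Finset Pointwise
open scoped LinearAlgebra.Projectivization

theorem Finset.card_add_self_le {α : Type*} [DecidableEq α] [AddCommMagma α] (s : Finset α) :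
    #(s + s) ≤ (#s + 1).choose 2 := by
  calc #(s + s) ≤ #(s.sym2.image (Sym2.lift ⟨(· + ·), add_comm⟩)) := by
        refine card_le_card fun x hx => ?_
        obtain ⟨y, hy, z, hz, rfl⟩ := mem_add.mp hx
        exact mem_image.mpr ⟨s(y, z), mk_mem_sym2_iff.mpr ⟨hy, hz⟩, rfl⟩
    _ ≤ #s.sym2 := card_image_le
    _ = (#s + 1).choose 2 := card_sym2 s

namespace QuadraticMap

variable {F V : Type*} [Field F] [AddCommGroup V] [Module F V]

theorem map_add_smul (q : QuadraticForm F V) (p v : V) (t : F) :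
    q (p + t • v) = q p + t * polar q p v + t * t * q v := by
  have h : polar q p (t • v) = q (p + t • v) - q p - q (t • v) := rfl
  rw [polar_smul_right, QuadraticMap.map_smul, smul_eq_mul] at h
  linear_combination -h

theorem polar_add_mul_eq_zero_of_map_add_smul_eq (q : QuadraticForm F V) {p v : V} {t : F}
    (ht : t ≠ 0) (h : q (p + t • v) = q p) : polar q p v + t * q v = 0 := by
  rw [map_add_smul] at h
  exact (mul_eq_zero.mp (by linear_combination h)).resolve_left ht

theorem eq_of_map_add_smul_eq (q : QuadraticForm F V) (hq : q.Anisotropic) {p v : V}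
    (hv : v ≠ 0) {s t : F} (hs : s ≠ 0) (ht : t ≠ 0) (hs' : q (p + s • v) = q p)
    (ht' : q (p + t • v) = q p) : s = t := by
  have hqv : q v ≠ 0 := fun h => hv (hq v h)
  have h : (s - t) * q v = 0 := by
    linear_combination polar_add_mul_eq_zero_of_map_add_smul_eq q hs hs' -
      polar_add_mul_eq_zero_of_map_add_smul_eq q ht ht'
  exact sub_eq_zero.mp ((mul_eq_zero.mp h).resolve_right hqv)

theorem map_add_smul_ne_of_polar_eq_zero (q : QuadraticForm F V) (hq : q.Anisotropic)
    {p v : V} (hv : v ≠ 0) (hpv : polar q p v = 0) {t : F} (ht : t ≠ 0) :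
    q (p + t • v) ≠ q p := fun h => by
  have h := polar_add_mul_eq_zero_of_map_add_smul_eq q ht h
  rw [hpv, zero_add] at h
  exact hv (hq v ((mul_eq_zero.mp h).resolve_left ht))

theorem exists_ne_zero_polar_eq_zero [FiniteDimensional F V] (q : QuadraticForm F V)
    (hV : 1 < finrank F V) (p : V) : ∃ v ≠ 0, polar q p v = 0 := by
  have : LinearMap.ker (polarBilin q p) ≠ ⊥ :=
    LinearMap.ker_ne_bot_of_finrank_lt (by rwa [finrank_self])
  obtain ⟨v, hv, hv0⟩ := Submodule.exists_mem_ne_zero_of_ne_bot this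
  exact ⟨v, hv0, hv⟩

theorem card_filter_eq_le_card_projectivization [Fintype V] [DecidableEq F]
    (q : QuadraticForm F V) (hq : q.Anisotropic) (hV : 1 < finrank F V) (a : F) :
    #{x | q x = a} ≤ Nat.card (ℙ F V) := by
  classical
  have : FiniteDimensional F V := Module.finite_of_finrank_pos (by omega)
  rcases (univ.filter fun x => q x = a).eq_empty_or_nonempty with h | ⟨p, hp⟩
  · simp [h]
  obtain ⟨v, hv, hpv⟩ := exists_ne_zero_polar_eq_zero q hV p
  have hqp : q p = a := (mem_filter.mp hp).2
  let f : V → ℙ F V := fun x =>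
    if h : x = p then .mk F v hv else .mk F (x - p) (sub_ne_zero.mpr h)
  have off_tangent : ∀ y, q y = a → (hy : y ≠ p) →
      Projectivization.mk F (y - p) (sub_ne_zero.mpr hy) ≠ .mk F v hv := by
    intro y hy hyp h
    obtain ⟨c, hc⟩ := (Projectivization.mk_eq_mk_iff' F _ _ _ hv).mp h
    have hc0 : c ≠ 0 := left_ne_zero_of_smul (hc ▸ sub_ne_zero.mpr hyp)
    refine map_add_smul_ne_of_polar_eq_zero q hq hv hpv hc0 ?_
    rw [hc, add_sub_cancel, hy, hqp]
  have hf : Set.InjOn f {x | q x = a} := by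
    intro x (hx : q x = a) y (hy : q y = a) hxy
    simp only [f] at hxy
    split_ifs at hxy with hxp hyp hyp
    · exact hxp.trans hyp.symm
    · exact absurd hxy.symm (off_tangent y hy hyp)
    · exact absurd hxy (off_tangent x hx hxp)
    obtain ⟨c, hc⟩ := (Projectivization.mk_eq_mk_iff' F _ _ _ _).mp hxy
    have hc0 : c ≠ 0 := left_ne_zero_of_smul (hc ▸ sub_ne_zero.mpr hxp)
    have hc1 : c = 1 := eq_of_map_add_smul_eq q hq (sub_ne_zero.mpr hyp) hc0 one_ne_zero
      (by rw [hc, add_sub_cancel, hx, hqp]) (by rw [one_smul, add_sub_cancel, hy, hqp])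
    rw [hc1, one_smul] at hc
    exact sub_left_injective hc.symm
  have : Fintype (ℙ F V) := Fintype.ofFinite _
  calc #{x | q x = a} ≤ #(univ : Finset (ℙ F V)) :=
        card_le_card_of_injOn f (fun _ _ => mem_univ _) (by simpa using hf)
    _ = Nat.card (ℙ F V) := (Nat.card_eq_fintype_card).symm

end QuadraticMap

theorem repGraph_two_lt_edist_zero {F V : Type*} [Field F] [AddCommGroup V] [Module F V]
    [DecidableEq V] (q : QuadraticForm F V) (a : F) {S : Finset V} (hS : ∀ x, q x = a → x ∈ S)
    {z : V} (hz : z ∉ insert 0 (S ∪ (S + S))) : 2 < (repGraph q a).edist 0 z := by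
  simp only [mem_insert, mem_union, not_or] at hz
  obtain ⟨hz0, hzS, hzSS⟩ := hz
  refine SimpleGraph.two_lt_edist_iff.mpr ⟨Ne.symm hz0, fun h => hzS (hS z ?_), ?_⟩
  · simpa using h.2
  · refine Set.eq_empty_of_forall_notMem fun w ⟨⟨_, hw⟩, ⟨_, hzw⟩⟩ => hzSS (mem_add.mpr ?_)
    refine ⟨w, hS w (by simpa using hw), z - w, hS _ ?_, add_sub_cancel _ _⟩
    simpa [QuadraticMap.map_sub] using hzw

theorem stmt_12_general {F V : Type*} [Field F] [Fintype F] (hF : 7 ≤ Fintype.card F)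
    [AddCommGroup V] [Module F V]
    (q : QuadraticForm F V) (hdim : Module.finrank F V = 2)
    (haniso : ∀ v : V, q v = 0 → v = 0)
    (a : F) :
    3 ≤ (repGraph q a).ediam ∧ ∃ u v : V, 3 ≤ (repGraph q a).edist u v := by
  classical
  have : Module.Finite F V := Module.finite_of_finrank_pos (by omega)
  have : Finite V := Module.finite_of_finite F
  have : Fintype V := Fintype.ofFinite V
  set n := Fintype.card F
  set S : Finset V := {x | q x = a}
  have hS : #S ≤ n + 1 := by
    simpa [Projectivization.card_of_finrank_two F V hdim] using
      card_filter_eq_le_card_projectivization q haniso (by omega) a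
  have hball : #(insert 0 (S ∪ (S + S))) < #(univ : Finset V) := by
    calc #(insert 0 (S ∪ (S + S))) ≤ #S + (#S + 1).choose 2 + 1 := by
          grw [card_insert_le, card_union_le, card_add_self_le]
      _ ≤ n + 1 + (n + 2).choose 2 + 1 := by
          have := Nat.choose_le_choose 2 (by omega : #S + 1 ≤ n + 2)
          omega
      _ < n ^ 2 := by
          have := Nat.add_one_mul_choose_eq (n + 1) 1
          rw [Nat.choose_one_right] at this
          nlinarith
      _ = #(univ : Finset V) := by rw [card_univ, Module.card_eq_pow_finrank (K := F), hdim]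
  obtain ⟨z, -, hz⟩ := exists_mem_notMem_of_card_lt_card hball
  have hdist : 3 ≤ (repGraph q a).edist 0 z :=
    Order.add_one_le_of_lt (repGraph_two_lt_edist_zero q a (by simp [S]) hz)
  exact ⟨hdist.trans SimpleGraph.edist_le_ediam, 0, z, hdist⟩

/-- Over a finite field with at least 7 elements, a 2-dimensional non-degenerate
anisotropic form `q` and `a ≠ 0` yield `diam G_{q,a} ≥ 3`; that is, some pair of vertices
has distance at least `3`. -/
theorem stmt_12 {F V : Type*} [Field F] [Fintype F] (hF : 7 ≤ Fintype.card F)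
    [AddCommGroup V] [Module F V]
    (q : QuadraticForm F V) (hdim : Module.finrank F V = 2)
    (hnd : ∀ x : V, (∀ y : V, polar (⇑q) x y = 0) → x = 0)
    (haniso : ∀ v : V, q v = 0 → v = 0)
    (a : F) (ha : a ≠ 0) :
    3 ≤ (repGraph q a).ediam ∧ ∃ u v : V, 3 ≤ (repGraph q a).edist u v :=
  stmt_12_general hF q hdim haniso a
end
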